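/- Let b ∈ ℚ with b ≠ 0, and let φ_b(z) = z/2 + b/z, extended to ℙ¹(ℚ) = ℚ ∪ {∞} by φ_b(0) = ∞ and φ_b(∞) = ∞. If α ∈ ℙ¹(ℚ) is a periodic point of φ_b of least period n (i.e., φ_b^n(α) = α and φ_b^k(α) ≠ α for all 0 < k < n), then n ≤ 2. -/

import Mathlib

/-!
Over `ℚ(√(2b))` the Möbius change of variable `u = (z + √(2b))/(z - √(2b))` conjugates `φ_b` to
`u ↦ u²`, so the trace `T = u + u⁻¹ = 2(z² + 2b)/(z² - 2b)`, which is defined over `ℚ`,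
semiconjugates `φ_b` on `ℙ¹(ℚ)` to the Chebyshev map `t ↦ t² - 2`. A rational periodic point of
`t ↦ t² - 2` is an integer (iteration squares denominators) of absolute value at most 2 (beyond 2
the map is expanding), hence one of its fixed points `2` and `-1`. Pulling back, `T α ∈ {∞, 2}`
makes `α` a fixed point of `φ_b`, while `T α = -1` forces `2b = -3α²`, and then `φ_b` swaps
`α` and `-α`.
-/

/-- `ℙ¹(ℚ)` is modelled as `Option ℚ`, with `none` as `∞`. -/
def phib (b : ℚ) : Option ℚ → Option ℚ
  | none => none
  | some x => if x = 0 then none else some (x / 2 + b / x)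

open Function

theorem Function.IsPeriodicPt.isFixedPt_of_isFixedPt_iterate {α : Type*} {f : α → α} {x : α}
    {n : ℕ} (hx : IsPeriodicPt f n x) (hn : 0 < n) {k : ℕ} (hk : IsFixedPt f (f^[k] x)) :
    IsFixedPt f x := by
  rw [← minimalPeriod_eq_one_iff_isFixedPt] at hk ⊢
  rwa [minimalPeriod_apply_iterate (mk_mem_periodicPts hn hx)] at hk

theorem Option.isPeriodicPt_map_some_iff {α : Type*} {f : α → α} {n : ℕ} {x : α} :
    IsPeriodicPt (Option.map f) n (some x) ↔ IsPeriodicPt f n x := by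
  have h : Semiconj some f (Option.map f) := fun _ => rfl
  rw [IsPeriodicPt, IsFixedPt, ← (h.iterate_right n).eq, Option.some_inj]
  rfl

def sqSubTwo (t : ℚ) : ℚ := t ^ 2 - 2

theorem den_sqSubTwo (t : ℚ) : (sqSubTwo t).den = t.den ^ 2 := by
  have h := Rat.sub_natCast_den (t ^ 2) 2
  rwa [Nat.cast_ofNat, Rat.den_pow] at h

theorem den_sqSubTwo_iterate (t : ℚ) (k : ℕ) : (sqSubTwo^[k] t).den = t.den ^ 2 ^ k := by
  induction k with
  | zero => simp
  | succ k ih => rw [iterate_succ_apply', den_sqSubTwo, ih, ← pow_mul, ← pow_succ]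

theorem den_eq_one_of_isPeriodicPt_sqSubTwo {t : ℚ} {n : ℕ} (hn : 0 < n)
    (ht : IsPeriodicPt sqSubTwo n t) : t.den = 1 := by
  have hden : t.den ^ 2 ^ n = t.den ^ 1 := by rw [← den_sqSubTwo_iterate, ht.eq, pow_one]
  by_contra hne
  have h1 : 1 < t.den := lt_of_le_of_ne t.den_pos (Ne.symm hne)
  exact (Nat.pow_lt_pow_right h1 (Nat.one_lt_two_pow hn.ne')).ne' hden

theorem lt_abs_sqSubTwo {t : ℚ} (ht : 2 < |t|) : |t| < |sqSubTwo t| := by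
  have h : |t| ^ 2 - 2 ≤ |sqSubTwo t| := by
    have h := abs_sub_abs_le_abs_sub (t ^ 2) 2
    rwa [abs_pow, abs_two] at h
  nlinarith

theorem abs_le_two_of_isPeriodicPt_sqSubTwo {t : ℚ} {n : ℕ} (hn : 0 < n)
    (ht : IsPeriodicPt sqSubTwo n t) : |t| ≤ 2 := by
  by_contra! h
  have hesc : ∀ k, 2 < |sqSubTwo^[k] t| := by
    intro k
    induction k with
    | zero => exact h
    | succ k ih => rw [iterate_succ_apply']; exact ih.trans (lt_abs_sqSubTwo ih)
  have hmono : StrictMono fun k => |sqSubTwo^[k] t| := strictMono_nat_of_lt_succ fun k => by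
    simpa only [iterate_succ_apply'] using lt_abs_sqSubTwo (hesc k)
  simpa [ht.eq] using hmono hn

theorem eq_two_or_eq_neg_one_of_isPeriodicPt_sqSubTwo {t : ℚ} {n : ℕ} (hn : 0 < n)
    (ht : IsPeriodicPt sqSubTwo n t) : t = 2 ∨ t = -1 := by
  obtain ⟨m, rfl⟩ : ∃ m : ℤ, t = m :=
    ⟨t.num, ((Rat.den_eq_one_iff t).mp (den_eq_one_of_isPeriodicPt_sqSubTwo hn ht)).symm⟩
  have hm : |m| ≤ 2 := by exact_mod_cast abs_le_two_of_isPeriodicPt_sqSubTwo hn ht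
  have isFixedPt_of (k : ℕ) (hk : IsFixedPt sqSubTwo (sqSubTwo^[k] m)) : IsFixedPt sqSubTwo m :=
    ht.isFixedPt_of_isFixedPt_iterate hn hk
  obtain ⟨hlo, hhi⟩ := abs_le.mp hm
  interval_cases m
  · have := isFixedPt_of 1 (by norm_num [IsFixedPt, sqSubTwo])
    norm_num [IsFixedPt, sqSubTwo] at this
  · norm_num
  · have := isFixedPt_of 2 (by norm_num [IsFixedPt, sqSubTwo])
    norm_num [IsFixedPt, sqSubTwo] at this
  · have := isFixedPt_of 1 (by norm_num [IsFixedPt, sqSubTwo])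
    norm_num [IsFixedPt, sqSubTwo] at this
  · norm_num

def phibTrace (b : ℚ) : Option ℚ → Option ℚ
  | none => some 2
  | some x => if x ^ 2 = 2 * b then none else some (2 * (x ^ 2 + 2 * b) / (x ^ 2 - 2 * b))

theorem phib_some_of_ne_zero (b : ℚ) {x : ℚ} (hx : x ≠ 0) :
    phib b (some x) = some (x / 2 + b / x) := if_neg hx

theorem sq_half_add_div_sub (b : ℚ) {x : ℚ} (hx : x ≠ 0) :
    (x / 2 + b / x) ^ 2 - 2 * b = (x ^ 2 - 2 * b) ^ 2 / (4 * x ^ 2) := by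
  field_simp
  ring

theorem semiconj_phibTrace {b : ℚ} (hb : b ≠ 0) :
    Semiconj (phibTrace b) (phib b) (Option.map sqSubTwo) := by
  rintro (_ | x)
  · norm_num [phib, phibTrace, sqSubTwo]
  by_cases hx : x = 0
  · subst hx
    have h2b : (0 : ℚ) ^ 2 ≠ 2 * b := by simpa [eq_comm] using hb
    simp only [phib, if_pos, phibTrace, if_neg h2b, Option.map_some, sqSubTwo]
    congr 1
    field_simp
    ring
  rw [phib_some_of_ne_zero b hx]
  by_cases hxb : x ^ 2 = 2 * b
  · have hfix : x / 2 + b / x = x := by field_simp; linarith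
    simp [phibTrace, hfix, hxb]
  have hxb' : x ^ 2 - 2 * b ≠ 0 := sub_ne_zero.mpr hxb
  have hy : (x / 2 + b / x) ^ 2 - 2 * b ≠ 0 := by
    rw [sq_half_add_div_sub b hx]
    positivity
  simp only [phibTrace, if_neg (sub_ne_zero.mp hy), if_neg hxb, Option.map_some, sqSubTwo]
  congr 1
  rw [div_eq_iff hy, sq_half_add_div_sub b hx]
  field_simp
  ring

theorem isPeriodicPt_two_of_isPeriodicPt_phib {b : ℚ} (hb : b ≠ 0) {α : Option ℚ} {n : ℕ}
    (hn : 0 < n) (hα : IsPeriodicPt (phib b) n α) : IsPeriodicPt (phib b) 2 α := by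
  rcases α with _ | a
  · rfl
  by_cases hab : a ^ 2 = 2 * b
  · have ha : a ≠ 0 := by rintro rfl; exact hb (by linarith)
    refine IsFixedPt.isPeriodicPt ?_ 2
    rw [IsFixedPt, phib_some_of_ne_zero b ha]
    congr 1
    field_simp
    linarith
  have ht := hα.map (semiconj_phibTrace hb)
  rw [phibTrace, if_neg hab, Option.isPeriodicPt_map_some_iff] at ht
  have hden : a ^ 2 - 2 * b ≠ 0 := sub_ne_zero.mpr hab
  rcases eq_two_or_eq_neg_one_of_isPeriodicPt_sqSubTwo hn ht with h | h
  · rw [div_eq_iff hden] at h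
    exact absurd (by linarith : b = 0) hb
  · rw [div_eq_iff hden] at h
    have ha : a ≠ 0 := by rintro rfl; exact hb (by linarith)
    have hflip : phib b (some a) = some (-a) := by
      rw [phib_some_of_ne_zero b ha]
      congr 1
      field_simp
      linarith
    have hback : phib b (some (-a)) = some a := by
      rw [phib_some_of_ne_zero b (neg_ne_zero.mpr ha)]
      congr 1
      field_simp
      linarith
    simp only [IsPeriodicPt, IsFixedPt, iterate_succ_apply, iterate_zero_apply, hflip, hback]

theorem phib_least_period_le_two (b : ℚ) (hb : b ≠ 0) (α : Option ℚ) (n : ℕ)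
    (hper : (phib b)^[n] α = α)
    (hleast : ∀ k : ℕ, 0 < k → k < n → (phib b)^[k] α ≠ α) :
    n ≤ 2 := by
  by_contra! hn
  exact hleast 2 two_pos hn (isPeriodicPt_two_of_isPeriodicPt_phib hb (by omega) hper)
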